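/- arXiv:1211.6944 — 2 statements merged into one kernel-verified Lean document; each statement's English description precedes it below -/
import Mathlib

section
/- Every colossally abundant number is superabundant: if N is such that there exists ε > 0 with σ(N)/N^{1+ε} ≥ σ(m)/m^{1+ε} for all m ≥ 1, then σ(m)/m < σ(N)/N for all m < N. -/
open Real

noncomputable def sigma1 (n : ℕ) : ℝ := ∑ d ∈ n.divisors, (d : ℝ)

/-- Every colossally abundant number is superabundant. -/
theorem CA_implies_SA (N : ℕ)
    (hCA : ∃ ε : ℝ, 0 < ε ∧ ∀ m : ℕ, 1 ≤ m →
      sigma1 N / (N : ℝ) ^ (1 + ε) ≥ sigma1 m / (m : ℝ) ^ (1 + ε)) :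
    ∀ m : ℕ, 1 ≤ m → m < N → sigma1 m / m < sigma1 N / N := by
  obtain ⟨ε, hε, h⟩ := hCA
  intro m hm hmN
  have hNpos : 0 < N := lt_trans (lt_of_lt_of_le Nat.zero_lt_one hm) hmN
  have hmr : (1:ℝ) ≤ (m:ℝ) := by exact_mod_cast hm
  have hNr : (0:ℝ) < (N:ℝ) := by exact_mod_cast hNpos
  have hmNr : (m:ℝ) < (N:ℝ) := by exact_mod_cast hmN
  have hmpos : (0:ℝ) < (m:ℝ) := lt_of_lt_of_le one_pos hmr
  have hσN : 0 < sigma1 N := by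
    have hmem : N ∈ N.divisors := Nat.mem_divisors_self N hNpos.ne'
    have : (N:ℝ) ≤ sigma1 N := by
      refine Finset.single_le_sum (f := fun d : ℕ => (d:ℝ)) ?_ hmem
      intro i _; exact Nat.cast_nonneg i
    linarith
  have hNε : (0:ℝ) < (N:ℝ) ^ (1 + ε) := rpow_pos_of_pos hNr _
  have hmε : (0:ℝ) < (m:ℝ) ^ (1 + ε) := rpow_pos_of_pos hmpos _
  have key := h m hm
  -- rewrite powers
  have hmsplit : (m:ℝ) ^ (1 + ε) = (m:ℝ) * (m:ℝ) ^ ε := by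
    rw [rpow_add hmpos, rpow_one]
  have hNsplit : (N:ℝ) ^ (1 + ε) = (N:ℝ) * (N:ℝ) ^ ε := by
    rw [rpow_add hNr, rpow_one]
  have h1 : sigma1 m / m ≤ sigma1 N / (N:ℝ) ^ (1 + ε) * (m:ℝ) ^ ε := by
    have hmεpos : (0:ℝ) < (m:ℝ) ^ ε := rpow_pos_of_pos hmpos _
    have : sigma1 m / (m:ℝ) ^ (1 + ε) * (m:ℝ) ^ ε = sigma1 m / m := by
      rw [hmsplit]; field_simp
    rw [← this]
    exact mul_le_mul_of_nonneg_right key hmεpos.le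
  have h2 : sigma1 N / (N:ℝ) ^ (1 + ε) * (m:ℝ) ^ ε
      < sigma1 N / (N:ℝ) ^ (1 + ε) * (N:ℝ) ^ ε := by
    have hlt : (m:ℝ) ^ ε < (N:ℝ) ^ ε := rpow_lt_rpow hmpos.le hmNr hε
    exact mul_lt_mul_of_pos_left hlt (div_pos hσN hNε)
  have h3 : sigma1 N / (N:ℝ) ^ (1 + ε) * (N:ℝ) ^ ε = sigma1 N / N := by
    rw [hNsplit]; field_simp
  linarith
end

section
/- For a fixed real s > 0 and for each integer r ≥ 1, the equation x^ε = (1 − x^{−s(r+1)})/(1 − x^{−sr}) in x > 1 has a unique solution x_r for each ε > 0, and x_r is a decreasing function of r. -/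
open Real Finset Filter

noncomputable def rS (t : ℝ) (r : ℕ) : ℝ := ∑ k ∈ Finset.range r, t ^ k

lemma rS_one_le {t : ℝ} (ht : 0 ≤ t) {r : ℕ} (hr : 1 ≤ r) : 1 ≤ rS t r := by
  have h0 : (0:ℕ) ∈ Finset.range r := Finset.mem_range.mpr hr
  calc (1:ℝ) = t ^ 0 := by simp
  _ ≤ rS t r := Finset.single_le_sum (f := fun k => t ^ k) (fun i _ => pow_nonneg ht i) h0

lemma rS_pos {t : ℝ} (ht : 0 ≤ t) {r : ℕ} (hr : 1 ≤ r) : 0 < rS t r :=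
  lt_of_lt_of_le one_pos (rS_one_le ht hr)

lemma rS_le {t : ℝ} (ht0 : 0 ≤ t) (ht1 : t ≤ 1) (r : ℕ) : rS t r ≤ r := by
  calc rS t r ≤ ∑ _k ∈ Finset.range r, (1:ℝ) :=
        Finset.sum_le_sum fun i _ => pow_le_one₀ ht0 ht1
  _ = r := by simp

lemma one_sub_pow_eq (t : ℝ) (r : ℕ) : 1 - t ^ r = (1 - t) * rS t r := by
  unfold rS
  linear_combination geom_sum_mul t r

lemma t_mul_rS (t : ℝ) (r : ℕ) : t * rS t r = rS t r + t ^ r - 1 := by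
  linear_combination one_sub_pow_eq t r

lemma rS_succ (t : ℝ) (r : ℕ) : rS t (r + 1) = rS t r + t ^ r := by
  unfold rS; rw [Finset.sum_range_succ]

lemma q_strict {u v : ℝ} (hu : 0 < u) (huv : u < v) {r : ℕ} (hr : 1 ≤ r) :
    u ^ r / rS u r < v ^ r / rS v r := by
  have hv : 0 < v := hu.trans huv
  rw [div_lt_div_iff₀ (rS_pos hu.le hr) (rS_pos hv.le hr)]
  unfold rS
  rw [Finset.mul_sum, Finset.mul_sum]
  apply Finset.sum_lt_sum_of_nonempty (Finset.nonempty_range_iff.mpr (by omega))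
  intro k hk
  have hkr : k < r := Finset.mem_range.mp hk
  obtain ⟨m, rfl⟩ : ∃ m, r = m + k := ⟨r - k, by omega⟩
  have hm : u ^ m < v ^ m := pow_lt_pow_left₀ huv hu.le (by omega)
  have hp : 0 < u ^ k * v ^ k := mul_pos (pow_pos hu k) (pow_pos hv k)
  rw [pow_add, pow_add]
  nlinarith [hm, hp]

lemma rpow_neg_nat {x : ℝ} (hx : 0 < x) (s : ℝ) (n : ℕ) :
    x ^ (-(s * (n:ℝ))) = (x ^ (-s)) ^ n := by
  rw [show -(s*(n:ℝ)) = (-s) * (n:ℝ) by ring, rpow_mul hx.le, rpow_natCast]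

lemma R_eq {x s : ℝ} (hx : 1 < x) (hs : 0 < s) {r : ℕ} (hr : 1 ≤ r) :
    (1 - x ^ (-(s * ((r:ℝ) + 1)))) / (1 - x ^ (-(s * (r:ℝ)))) =
      1 + (x ^ (-s)) ^ r / rS (x ^ (-s)) r := by
  have hx0 : (0:ℝ) < x := lt_trans one_pos hx
  set t := x ^ (-s) with ht
  have htpos : 0 < t := rpow_pos_of_pos hx0 _
  have ht1 : t < 1 := rpow_lt_one_of_one_lt_of_neg hx (neg_neg_of_pos hs)
  have hc : ((r:ℝ) + 1) = ((r + 1 : ℕ) : ℝ) := by push_cast; ring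
  rw [hc, rpow_neg_nat hx0 s (r+1), rpow_neg_nat hx0 s r]
  rw [one_sub_pow_eq t (r+1), one_sub_pow_eq t r]
  have h1t : (1 : ℝ) - t ≠ 0 := sub_ne_zero.mpr (ne_of_lt ht1).symm
  have hS : rS t r ≠ 0 := (rS_pos htpos.le hr).ne'
  rw [mul_div_mul_left _ _ h1t, rS_succ, add_div, div_self hS]

lemma g_strictMono {s ε : ℝ} (hs : 0 < s) (hε : 0 < ε) {r : ℕ} (hr : 1 ≤ r) :
    StrictMonoOn (fun x : ℝ =>
      x ^ ε - (1 - x ^ (-(s * ((r:ℝ) + 1)))) / (1 - x ^ (-(s * (r:ℝ))))) (Set.Ioi 1) := by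
  intro x hx y hy hxy
  simp only [Set.mem_Ioi] at hx hy
  simp only
  rw [R_eq hx hs hr, R_eq hy hs hr]
  have h1 : x ^ ε < y ^ ε := rpow_lt_rpow (le_of_lt (lt_trans one_pos hx)) hxy hε
  have h2 : y ^ (-s) < x ^ (-s) :=
    rpow_lt_rpow_of_neg (lt_trans one_pos hx) hxy (neg_neg_of_pos hs)
  have h3 := q_strict (rpow_pos_of_pos (lt_trans one_pos (hx.trans hxy)) (-s)) h2 hr
  linarith

lemma g_contAt {s ε : ℝ} (hs : 0 < s) (r : ℕ) (hr : 1 ≤ r) {z : ℝ} (hz : 1 < z) :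
    ContinuousAt (fun x : ℝ =>
      x ^ ε - (1 - x ^ (-(s * ((r:ℝ) + 1)))) / (1 - x ^ (-(s * (r:ℝ))))) z := by
  have hz0 : (0:ℝ) < z := lt_trans one_pos hz
  have c1 : ContinuousAt (fun x : ℝ => x ^ ε) z :=
    Real.continuousAt_rpow_const z ε (Or.inl hz0.ne')
  have c2 : ContinuousAt (fun x : ℝ => x ^ (-(s * ((r:ℝ)+1)))) z :=
    Real.continuousAt_rpow_const z _ (Or.inl hz0.ne')
  have c3 : ContinuousAt (fun x : ℝ => x ^ (-(s * (r:ℝ)))) z :=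
    Real.continuousAt_rpow_const z _ (Or.inl hz0.ne')
  have hden : 1 - z ^ (-(s * (r:ℝ))) ≠ 0 := by
    have hrr : (0:ℝ) < (r:ℝ) := by exact_mod_cast hr
    have : z ^ (-(s*(r:ℝ))) < 1 :=
      rpow_lt_one_of_one_lt_of_neg hz (by nlinarith)
    intro h; linarith [sub_eq_zero.mp h]
  exact c1.sub ((continuousAt_const.sub c2).div (continuousAt_const.sub c3) hden)

lemma exists_root {s ε : ℝ} (hs : 0 < s) (hε : 0 < ε) {r : ℕ} (hr : 1 ≤ r) :
    ∃ x : ℝ, 1 < x ∧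
      x ^ ε = (1 - x ^ (-(s * ((r:ℝ) + 1)))) / (1 - x ^ (-(s * (r:ℝ)))) := by
  have hrr : (0:ℝ) < (r:ℝ) := by exact_mod_cast hr
  -- lower endpoint
  have hcont1 : ContinuousAt (fun x : ℝ => x ^ ε - 1 - x ^ (-(s * (r:ℝ))) / r) 1 := by
    have c1 : ContinuousAt (fun x : ℝ => x ^ ε) 1 :=
      Real.continuousAt_rpow_const 1 ε (Or.inl one_ne_zero)
    have c2 : ContinuousAt (fun x : ℝ => x ^ (-(s * (r:ℝ)))) 1 :=
      Real.continuousAt_rpow_const 1 _ (Or.inl one_ne_zero)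
    exact (c1.sub continuousAt_const).sub (c2.div_const _)
  have hneg : (1:ℝ) ^ ε - 1 - (1:ℝ) ^ (-(s * (r:ℝ))) / r < 0 := by
    rw [one_rpow, one_rpow]
    have : (0:ℝ) < 1 / r := by positivity
    linarith
  have hev : ∀ᶠ x : ℝ in nhdsWithin (1:ℝ) (Set.Ioi 1),
      x ^ ε - 1 - x ^ (-(s * (r:ℝ))) / r < 0 :=
    (hcont1.tendsto.mono_left nhdsWithin_le_nhds).eventually_lt_const hneg
  obtain ⟨a, hah, ha1⟩ := (hev.and eventually_mem_nhdsWithin).exists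
  simp only [Set.mem_Ioi] at ha1
  have ha0 : (0:ℝ) < a := lt_trans one_pos ha1
  -- g a < 0
  have hga : a ^ ε - (1 - a ^ (-(s * ((r:ℝ) + 1)))) / (1 - a ^ (-(s * (r:ℝ)))) < 0 := by
    rw [R_eq ha1 hs hr]
    set t := a ^ (-s) with htdef
    have htpos : 0 < t := rpow_pos_of_pos ha0 _
    have ht1 : t < 1 := rpow_lt_one_of_one_lt_of_neg ha1 (neg_neg_of_pos hs)
    have htr : a ^ (-(s * (r:ℝ))) = t ^ r := rpow_neg_nat ha0 s r
    rw [htr] at hah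
    have hSr : rS t r ≤ r := rS_le htpos.le ht1.le r
    have hdiv : t ^ r / (r:ℝ) ≤ t ^ r / rS t r :=
      div_le_div_of_nonneg_left (pow_nonneg htpos.le r) (rS_pos htpos.le hr) hSr
    linarith
  -- upper endpoint
  set b := max ((2:ℝ) ^ (1/ε)) 2 with hbdef
  have hb1 : 1 < b := lt_of_lt_of_le one_lt_two (le_max_right _ _)
  have hb0 : (0:ℝ) < b := lt_trans one_pos hb1
  have hb2 : (2:ℝ) ≤ b ^ ε := by
    have h0 : (2:ℝ) ^ (1/ε) ≤ b := le_max_left _ _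
    have h1 := rpow_le_rpow (rpow_pos_of_pos two_pos (1/ε)).le h0 hε.le
    rwa [← rpow_mul (by norm_num : (0:ℝ) ≤ 2), one_div_mul_cancel hε.ne', rpow_one] at h1
  have hgb : 0 < b ^ ε - (1 - b ^ (-(s * ((r:ℝ) + 1)))) / (1 - b ^ (-(s * (r:ℝ)))) := by
    rw [R_eq hb1 hs hr]
    set t := b ^ (-s) with htdef
    have htpos : 0 < t := rpow_pos_of_pos hb0 _
    have ht1 : t < 1 := rpow_lt_one_of_one_lt_of_neg hb1 (neg_neg_of_pos hs)
    have h4 : t ^ r / rS t r ≤ t ^ r := div_le_self (pow_nonneg htpos.le r) (rS_one_le htpos.le hr)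
    have h5 : t ^ r < 1 := pow_lt_one₀ htpos.le ht1 (by omega)
    linarith
  -- IVT
  set g := fun x : ℝ =>
    x ^ ε - (1 - x ^ (-(s * ((r:ℝ) + 1)))) / (1 - x ^ (-(s * (r:ℝ)))) with hgdef
  have hab : a < b := by
    by_contra h
    push_neg at h
    rcases eq_or_lt_of_le h with h' | h'
    · rw [h'] at hgb; linarith
    · have hlt : g b < g a :=
        g_strictMono hs hε hr (Set.mem_Ioi.mpr hb1) (Set.mem_Ioi.mpr ha1) h'
      simp only [hgdef] at hlt
      linarith
  have hcont : ContinuousOn g (Set.Icc a b) := fun z hz =>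
    (g_contAt hs r hr (lt_of_lt_of_le ha1 hz.1) (ε := ε)).continuousWithinAt
  have hmem : (0:ℝ) ∈ Set.Icc (g a) (g b) := ⟨hga.le, hgb.le⟩
  obtain ⟨c, hc, hc0⟩ := intermediate_value_Icc hab.le hcont hmem
  rw [hgdef] at hc0
  exact ⟨c, lt_of_lt_of_le ha1 hc.1, sub_eq_zero.mp hc0⟩

/-- Ramanujan's parametrization: existence, uniqueness, and monotonicity in `r` of `x_r`. -/
theorem ramanujan_x_r (s : ℝ) (hs : 0 < s) (ε : ℝ) (hε : 0 < ε) :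
    (∀ r : ℕ, 1 ≤ r → ∃! x : ℝ, 1 < x ∧
      x ^ ε = (1 - x ^ (-(s * (r + 1)))) / (1 - x ^ (-(s * r)))) ∧
    (∀ r : ℕ, 1 ≤ r → ∀ x y : ℝ,
      (1 < x ∧ x ^ ε = (1 - x ^ (-(s * (r + 1)))) / (1 - x ^ (-(s * r)))) →
      (1 < y ∧ y ^ ε = (1 - y ^ (-(s * (r + 2)))) / (1 - y ^ (-(s * (r + 1))))) →
      y < x) := by
  constructor
  · intro r hr
    obtain ⟨x, hx1, hx2⟩ := exists_root hs hε hr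
    refine ⟨x, ⟨hx1, hx2⟩, ?_⟩
    rintro y ⟨hy1, hy2⟩
    exact (g_strictMono hs hε hr).injOn (Set.mem_Ioi.mpr hy1) (Set.mem_Ioi.mpr hx1)
      (by show y ^ ε - _ = x ^ ε - _
          rw [sub_eq_zero.mpr hy2, sub_eq_zero.mpr hx2])
  · intro r hr x y ⟨hx1, hx2⟩ ⟨hy1, hy2⟩
    have hy0 : (0:ℝ) < y := lt_trans one_pos hy1
    -- rewrite y's equation as the (r+1)-equation and compare with the r-equation
    have hc1 : ((r:ℝ) + 2) = (((r+1:ℕ)):ℝ) + 1 := by push_cast; ring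
    have hc2 : ((r:ℝ) + 1) = (((r+1:ℕ)):ℝ) := by push_cast; ring
    have hy2' : y ^ ε =
        (1 - y ^ (-(s * (((r+1:ℕ):ℝ) + 1)))) / (1 - y ^ (-(s * ((r+1:ℕ):ℝ)))) := by
      rw [← hc1, ← hc2]; exact hy2
    -- R_{r+1}(y) < R_r(y)
    have hRlt : (1 - y ^ (-(s * (((r+1:ℕ):ℝ) + 1)))) / (1 - y ^ (-(s * ((r+1:ℕ):ℝ)))) <
        (1 - y ^ (-(s * ((r:ℝ) + 1)))) / (1 - y ^ (-(s * (r:ℝ)))) := by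
      rw [R_eq hy1 hs (Nat.le_add_right 1 r |>.trans (by omega) : 1 ≤ r+1), R_eq hy1 hs hr]
      set t := y ^ (-s) with htdef
      have htpos : 0 < t := rpow_pos_of_pos hy0 _
      have hSr := rS_pos htpos.le hr
      have hSr1 := rS_pos htpos.le (show 1 ≤ r+1 by omega)
      have key : t ^ (r+1) * rS t r = t ^ r * (rS t r + t ^ r) - t ^ r := by
        rw [pow_succ]
        linear_combination (t ^ r) * t_mul_rS t r
      have hdiv : t ^ (r+1) / rS t (r+1) < t ^ r / rS t r := by
        rw [div_lt_div_iff₀ hSr1 hSr, rS_succ]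
        nlinarith [pow_pos htpos r]
      linarith
    have hgy : y ^ ε - (1 - y ^ (-(s * ((r:ℝ) + 1)))) / (1 - y ^ (-(s * (r:ℝ)))) < 0 := by
      rw [hy2']; linarith
    have hgx : x ^ ε - (1 - x ^ (-(s * ((r:ℝ) + 1)))) / (1 - x ^ (-(s * (r:ℝ)))) = 0 :=
      sub_eq_zero.mpr hx2
    by_contra h
    push_neg at h
    rcases eq_or_lt_of_le h with h' | h'
    · rw [h'] at hgx; linarith
    · have hlt : x ^ ε - (1 - x ^ (-(s * ((r:ℝ) + 1)))) / (1 - x ^ (-(s * (r:ℝ)))) <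
          y ^ ε - (1 - y ^ (-(s * ((r:ℝ) + 1)))) / (1 - y ^ (-(s * (r:ℝ)))) :=
        g_strictMono hs hε hr (Set.mem_Ioi.mpr hx1) (Set.mem_Ioi.mpr hy1) h'
      linarith
end
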